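/- Let Γ'(y', t) = (2πt)^{-(n-1)/2} e^{-|y'|²/(2t)} be the Gaussian kernel in R^{n-1} and E the fundamental solution of the Laplace equation in R^n. Then for x' ∈ R^{n-1}\{0}, y_n > 0, t > 0, and 1 ≤ j ≤ n-1: |∫_{|y'| ≤ |x'|/2} D_{y_j}Γ'(y',t) D_{y_n}E(x'-y', y_n) dy'| ≤ C |x'|^{-n} ∫_{|y'| ≤ |x'|/(2√t)} |y'|² e^{-|y'|²} dy', with C independent of x', y_n, t. -/

import Mathlib

/-!
The Gaussian factor `D_jΓ'(·, t)` is odd, so its integral over the ball `|y'| ≤ |x'|/2` vanishes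
and `D_nE(x' - y', y_n)` may be replaced by its increment from `y' = 0`. On that ball the mean
value theorem bounds the increment by `(n/2) (|x'|/2)^{-n} |y'|`; the factor `y_n` of `D_nE` is
absorbed through `2 y_n |x' - y'| ≤ |x' - y'|² + y_n²`. What remains is the second moment of the
Gaussian over the ball, which the substitution `y' = √(2t) z` turns into `(2t)^{(n+1)/2}` times the
integral on the right; this power of `t` cancels the normalisation `(2πt)^{-(n-1)/2} / t`.
-/

open MeasureTheory Real Metric
open scoped RealInnerProductSpace Pointwise

theorem deriv_const_mul_add_sq_rpow (c b q a : ℝ) (h : b + a ^ 2 ≠ 0) :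
    deriv (fun a : ℝ => c * (b + a ^ 2) ^ q) a = c * (q * (b + a ^ 2) ^ (q - 1) * (2 * a)) := by
  have h1 : HasDerivAt (fun a : ℝ => b + a ^ 2) (2 * a) a := by
    simpa using (hasDerivAt_pow 2 a).const_add b
  rw [((h1.rpow_const (p := q) (Or.inl h)).const_mul c).deriv]
  ring

theorem two_mul_abs_mul_mul_rpow_sub_one_le {a b : ℝ} (s : ℝ) (hu : 0 < a ^ 2 + b ^ 2) :
    2 * |b| * a * (a ^ 2 + b ^ 2) ^ (s - 1) ≤ (a ^ 2 + b ^ 2) ^ s := by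
  have hamgm : 2 * |b| * a ≤ a ^ 2 + b ^ 2 := by
    nlinarith [sq_nonneg (a - |b|), sq_abs b]
  rw [rpow_sub_one hu.ne', mul_div, div_le_iff₀ hu]
  exact mul_le_mul_of_nonneg_right hamgm (rpow_nonneg hu.le s) |>.trans_eq (mul_comm _ _)

theorem div_two_rpow_neg_natCast {a : ℝ} (ha : 0 ≤ a) (n : ℕ) :
    (a / 2) ^ (-(n : ℝ)) = 2 ^ n * a ^ (-(n : ℝ)) := by
  rw [div_rpow ha zero_le_two, rpow_neg zero_le_two, rpow_natCast]
  field_simp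

theorem half_norm_le_norm_sub_of_mem_closedBall {E : Type*} [SeminormedAddCommGroup E] {x z : E}
    (hz : z ∈ closedBall (0 : E) (‖x‖ / 2)) :
    ‖x‖ / 2 ≤ ‖x - z‖ := by
  rw [mem_closedBall_zero_iff] at hz
  linarith [norm_sub_norm_le x z]

section InnerProductSpace

variable {E : Type*} [NormedAddCommGroup E] [InnerProductSpace ℝ E]

theorem fderiv_const_mul_exp_neg_norm_sq_div_apply (c t : ℝ) (y v : E) :
    fderiv ℝ (fun z : E => c * exp (-‖z‖ ^ 2 / (2 * t))) y v
      = c * exp (-‖y‖ ^ 2 / (2 * t)) * (-⟪y, v⟫ / t) := by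
  have h : HasFDerivAt (fun z : E => -‖z‖ ^ 2 / (2 * t)) (-(2 * t)⁻¹ • 2 • innerSL ℝ y) y := by
    simpa [div_eq_inv_mul, neg_div, ← neg_mul] using
      ((hasFDerivAt_id y).norm_sq.const_mul (-(2 * t)⁻¹))
  rw [(h.exp.const_mul c).fderiv]
  simp only [neg_smul, smul_neg, neg_apply, smul_apply, coe_innerSL_apply, nsmul_eq_mul,
    Nat.cast_ofNat, smul_eq_mul]
  field_simp

theorem hasFDerivAt_mul_norm_sub_sq_add_sq_rpow (x z : E) (b s : ℝ)
    (hu : ‖x - z‖ ^ 2 + b ^ 2 ≠ 0) :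
    HasFDerivAt (fun w : E => b * (‖x - w‖ ^ 2 + b ^ 2) ^ s)
      ((b * (s * (‖x - z‖ ^ 2 + b ^ 2) ^ (s - 1)) * 2) • innerSL ℝ (z - x)) z := by
  have h : HasFDerivAt (fun w : E => ‖x - w‖ ^ 2 + b ^ 2) (2 • innerSL ℝ (z - x)) z := by
    simpa [map_sub, sub_eq_add_neg, add_comm] using
      (((hasFDerivAt_id z).const_sub x).norm_sq).add_const (b ^ 2)
  refine ((h.rpow_const (p := s) (Or.inl hu)).const_mul b).congr_fderiv ?_
  ext v
  simp only [smul_apply, coe_innerSL_apply, nsmul_eq_mul, Nat.cast_ofNat, smul_eq_mul]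
  ring

theorem fderiv_const_mul_exp_apply_mul_deriv_const_mul_rpow (c t d m : ℝ) (x y v : E) {b : ℝ}
    (hb : b ≠ 0) :
    fderiv ℝ (fun z : E => c * exp (-‖z‖ ^ 2 / (2 * t))) y v
        * deriv (fun a : ℝ => d * (‖x - y‖ ^ 2 + a ^ 2) ^ ((2 - m) / 2)) b
      = d * (2 - m) * (c * exp (-‖y‖ ^ 2 / (2 * t)) * (-⟪y, v⟫ / t)
          * (b * (‖x - y‖ ^ 2 + b ^ 2) ^ (-m / 2))) := by
  rw [fderiv_const_mul_exp_neg_norm_sq_div_apply,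
    deriv_const_mul_add_sq_rpow _ _ _ _ (by positivity), show (2 - m) / 2 - 1 = -m / 2 by ring]
  ring

theorem abs_mul_rpow_sub_le_of_mem_closedBall {x y : E} (hx : x ≠ 0)
    (hy : y ∈ closedBall (0 : E) (‖x‖ / 2)) (b : ℝ) {s : ℝ} (hs : s ≤ 0) :
    |b * (‖x - y‖ ^ 2 + b ^ 2) ^ s - b * (‖x‖ ^ 2 + b ^ 2) ^ s|
      ≤ |s| * (‖x‖ / 2) ^ (2 * s) * ‖y‖ := by
  have hx2 : 0 < ‖x‖ / 2 := by positivity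
  have hu : ∀ z ∈ closedBall (0 : E) (‖x‖ / 2), (‖x‖ / 2) ^ 2 ≤ ‖x - z‖ ^ 2 + b ^ 2 := fun z hz =>
    le_add_of_le_of_nonneg (pow_le_pow_left₀ hx2.le (half_norm_le_norm_sub_of_mem_closedBall hz) 2)
      (sq_nonneg b)
  have hderiv : ∀ z ∈ closedBall (0 : E) (‖x‖ / 2), HasFDerivWithinAt
      (fun w : E => b * (‖x - w‖ ^ 2 + b ^ 2) ^ s)
      ((b * (s * (‖x - z‖ ^ 2 + b ^ 2) ^ (s - 1)) * 2) • innerSL ℝ (z - x))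
      (closedBall (0 : E) (‖x‖ / 2)) z := fun z hz =>
    (hasFDerivAt_mul_norm_sub_sq_add_sq_rpow x z b s
      ((pow_pos hx2 2).trans_le (hu z hz)).ne').hasFDerivWithinAt
  have hbound : ∀ z ∈ closedBall (0 : E) (‖x‖ / 2),
      ‖(b * (s * (‖x - z‖ ^ 2 + b ^ 2) ^ (s - 1)) * 2) • innerSL ℝ (z - x)‖
        ≤ |s| * (‖x‖ / 2) ^ (2 * s) := by
    intro z hz
    have hupos : 0 < ‖x - z‖ ^ 2 + b ^ 2 := (pow_pos hx2 2).trans_le (hu z hz)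
    calc ‖(b * (s * (‖x - z‖ ^ 2 + b ^ 2) ^ (s - 1)) * 2) • innerSL ℝ (z - x)‖
        = |s| * (2 * |b| * ‖x - z‖ * (‖x - z‖ ^ 2 + b ^ 2) ^ (s - 1)) := by
          rw [norm_smul, innerSL_apply_norm, norm_sub_rev z x, Real.norm_eq_abs, abs_mul, abs_mul,
            abs_mul, abs_of_pos (rpow_pos_of_pos hupos _), abs_two]
          ring
      _ ≤ |s| * (‖x - z‖ ^ 2 + b ^ 2) ^ s :=
          mul_le_mul_of_nonneg_left (two_mul_abs_mul_mul_rpow_sub_one_le s hupos) (abs_nonneg s)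
      _ ≤ |s| * ((‖x‖ / 2) ^ 2) ^ s :=
          mul_le_mul_of_nonneg_left (rpow_le_rpow_of_nonpos (by positivity) (hu z hz) hs)
            (abs_nonneg s)
      _ = |s| * (‖x‖ / 2) ^ (2 * s) := by
          rw [← rpow_natCast_mul hx2.le]
          norm_num
  simpa [Real.norm_eq_abs] using Convex.norm_image_sub_le_of_norm_hasFDerivWithin_le hderiv hbound
    (convex_closedBall 0 _) (mem_closedBall_self hx2.le) hy

end InnerProductSpace

theorem abs_setIntegral_mul_le_of_setIntegral_eq_zero {α : Type*} [MeasurableSpace α]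
    {μ : Measure α} {s : Set α} (hs : MeasurableSet s) {g φ w : α → ℝ} (c : ℝ)
    (hg : IntegrableOn g s μ) (hgφ : IntegrableOn (fun y => g y * φ y) s μ)
    (hw : IntegrableOn w s μ) (hg0 : ∫ y in s, g y ∂μ = 0)
    (hbound : ∀ y ∈ s, |g y| * |φ y - c| ≤ w y) :
    |∫ y in s, g y * φ y ∂μ| ≤ ∫ y in s, w y ∂μ := by
  have hcentered : ∫ y in s, g y * φ y ∂μ = ∫ y in s, g y * (φ y - c) ∂μ := by
    simp only [mul_sub]
    rw [integral_sub hgφ (hg.mul_const c), integral_mul_const, hg0, zero_mul, sub_zero]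
  rw [hcentered, ← Real.norm_eq_abs]
  refine norm_integral_le_of_norm_le hw ((ae_restrict_iff' hs).2 (.of_forall fun y hy => ?_))
  rw [Real.norm_eq_abs, abs_mul]
  exact hbound y hy

section FiniteDimensional

variable {E : Type*} [NormedAddCommGroup E] [InnerProductSpace ℝ E] [FiniteDimensional ℝ E]
  [MeasurableSpace E] [BorelSpace E] (μ : Measure E) [μ.IsAddHaarMeasure]

theorem setIntegral_closedBall_eq_zero_of_odd {f : E → ℝ} (hf : ∀ y, f (-y) = -f y) (r : ℝ) :
    ∫ y in closedBall (0 : E) r, f y ∂μ = 0 := by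
  have h := Measure.setIntegral_comp_smul μ f (closedBall (0 : E) r) (R := -1) (by norm_num)
  simp only [neg_smul, one_smul, hf, integral_neg, abs_inv, abs_pow, abs_neg, abs_one, one_pow,
    inv_one, smul_closedBall' (by norm_num : (-1 : ℝ) ≠ 0), smul_zero, norm_neg, norm_one, one_mul,
    smul_eq_mul] at h
  linarith

theorem abs_setIntegral_gaussian_deriv_mul_le {x : E} (hx : x ≠ 0) (v : E) (c b : ℝ) {s t : ℝ}
    (hs : s ≤ 0) (ht : 0 < t) :
    |∫ y in closedBall (0 : E) (‖x‖ / 2),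
        c * exp (-‖y‖ ^ 2 / (2 * t)) * (-⟪y, v⟫ / t) * (b * (‖x - y‖ ^ 2 + b ^ 2) ^ s) ∂μ|
      ≤ |c| / t * ‖v‖ * (|s| * (‖x‖ / 2) ^ (2 * s)) *
        ∫ y in closedBall (0 : E) (‖x‖ / 2), ‖y‖ ^ 2 * exp (-‖y‖ ^ 2 / (2 * t)) ∂μ := by
  set B := closedBall (0 : E) (‖x‖ / 2)
  set g : E → ℝ := fun y => c * exp (-‖y‖ ^ 2 / (2 * t)) * (-⟪y, v⟫ / t)
  set φ : E → ℝ := fun y => b * (‖x - y‖ ^ 2 + b ^ 2) ^ s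
  have hx2 : 0 < ‖x‖ / 2 := by positivity
  have hg : Continuous g := by fun_prop
  have hφ : ContinuousOn φ B := fun z hz =>
    (hasFDerivAt_mul_norm_sub_sq_add_sq_rpow x z b s (by
      nlinarith [half_norm_le_norm_sub_of_mem_closedBall hz, sq_nonneg b])).continuousAt
      |>.continuousWithinAt
  have hg0 : ∫ y in B, g y ∂μ = 0 := setIntegral_closedBall_eq_zero_of_odd μ
    (fun y => by simp only [g, norm_neg, inner_neg_left]; ring) _
  rw [← integral_const_mul]
  refine abs_setIntegral_mul_le_of_setIntegral_eq_zero measurableSet_closedBall (φ 0)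
    (hg.continuousOn.integrableOn_compact (isCompact_closedBall _ _))
    ((hg.continuousOn.mul hφ).integrableOn_compact (isCompact_closedBall _ _))
    (ContinuousOn.integrableOn_compact (isCompact_closedBall _ _) (by fun_prop)) hg0 fun y hy => ?_
  have hgy : |g y| ≤ |c| / t * ‖v‖ * (‖y‖ * exp (-‖y‖ ^ 2 / (2 * t))) := by
    calc |g y| = |c| / t * exp (-‖y‖ ^ 2 / (2 * t)) * |⟪y, v⟫| := by
          simp only [g, abs_mul, abs_div, abs_neg, abs_exp, abs_of_pos ht]
          ring
      _ ≤ |c| / t * exp (-‖y‖ ^ 2 / (2 * t)) * (‖y‖ * ‖v‖) := by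
          gcongr
          exact abs_real_inner_le_norm y v
      _ = _ := by ring
  have hφy : |φ y - φ 0| ≤ |s| * (‖x‖ / 2) ^ (2 * s) * ‖y‖ := by
    simpa [φ] using abs_mul_rpow_sub_le_of_mem_closedBall hx hy b hs
  calc |g y| * |φ y - φ 0|
      ≤ (|c| / t * ‖v‖ * (‖y‖ * exp (-‖y‖ ^ 2 / (2 * t)))) * (|s| * (‖x‖ / 2) ^ (2 * s) * ‖y‖) :=
        mul_le_mul hgy hφy (abs_nonneg _) (by positivity)
    _ = _ := by ring

theorem setIntegral_closedBall_norm_sq_mul_exp_le {r t : ℝ} (hr : 0 ≤ r) (ht : 0 < t) :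
    ∫ y in closedBall (0 : E) r, ‖y‖ ^ 2 * exp (-‖y‖ ^ 2 / (2 * t)) ∂μ
      ≤ √(2 * t) ^ (Module.finrank ℝ E + 2) *
        ∫ z in closedBall (0 : E) (r / √t), ‖z‖ ^ 2 * exp (-‖z‖ ^ 2) ∂μ := by
  set a := √(2 * t)
  set G : E → ℝ := fun z => ‖z‖ ^ 2 * exp (-‖z‖ ^ 2)
  have ha : 0 < a := by positivity
  have ha2 : a ^ 2 = 2 * t := sq_sqrt (by positivity)
  have hG : ∀ y : E, ‖y‖ ^ 2 * exp (-‖y‖ ^ 2 / (2 * t)) = a ^ 2 * G (a⁻¹ • y) := fun y => by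
    simp only [G, norm_smul, norm_inv, Real.norm_eq_abs, abs_of_pos ha, mul_pow, inv_pow, ha2]
    field_simp
  have hball : a⁻¹ • closedBall (0 : E) r = closedBall 0 (r / a) := by
    rw [smul_closedBall' (inv_ne_zero ha.ne'), smul_zero, norm_inv, Real.norm_eq_abs,
      abs_of_pos ha, inv_mul_eq_div]
  calc ∫ y in closedBall (0 : E) r, ‖y‖ ^ 2 * exp (-‖y‖ ^ 2 / (2 * t)) ∂μ
      = a ^ 2 * ∫ y in closedBall (0 : E) r, G (a⁻¹ • y) ∂μ := by
        simp only [hG, integral_const_mul]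
    _ = a ^ (Module.finrank ℝ E + 2) * ∫ z in closedBall (0 : E) (r / a), G z ∂μ := by
        rw [Measure.setIntegral_comp_smul_of_pos μ G _ (inv_pos.2 ha), hball, inv_pow, inv_inv,
          smul_eq_mul, pow_add]
        ring
    _ ≤ a ^ (Module.finrank ℝ E + 2) * ∫ z in closedBall (0 : E) (r / √t), G z ∂μ := by
        refine mul_le_mul_of_nonneg_left (setIntegral_mono_set ?_
          (.of_forall fun z => by positivity) (closedBall_subset_closedBall ?_).eventuallyLE)
          (by positivity)
        · exact ContinuousOn.integrableOn_compact (isCompact_closedBall _ _) (by fun_prop)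
        · gcongr
          exact sqrt_le_sqrt (by linarith)

end FiniteDimensional

theorem two_mul_pi_mul_rpow_div_mul_sqrt_pow {n : ℕ} (hn : 1 ≤ n) {t : ℝ} (ht : 0 < t) :
    (2 * π * t) ^ (-((n : ℝ) - 1) / 2) / t * √(2 * t) ^ (n - 1 + 2)
      = 2 * π ^ (-((n : ℝ) - 1) / 2) := by
  have h2t : 0 < 2 * t := by positivity
  have hsqrt : √(2 * t) ^ (n - 1 + 2) = (2 * t) ^ (((n : ℝ) + 1) / 2) := by
    rw [sqrt_eq_rpow, ← rpow_natCast, ← rpow_mul h2t.le]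
    congr 1
    push_cast [Nat.cast_sub hn]
    ring
  rw [hsqrt, show 2 * π * t = 2 * t * π by ring, mul_rpow h2t.le pi_pos.le]
  have hexp : (2 * t) ^ (-((n : ℝ) - 1) / 2) * (2 * t) ^ (((n : ℝ) + 1) / 2) = 2 * t := by
    rw [← rpow_add h2t, show -((n : ℝ) - 1) / 2 + ((n : ℝ) + 1) / 2 = 1 by ring, rpow_one]
  calc (2 * t) ^ (-((n : ℝ) - 1) / 2) * π ^ (-((n : ℝ) - 1) / 2) / t
        * (2 * t) ^ (((n : ℝ) + 1) / 2)
      = (2 * t) ^ (-((n : ℝ) - 1) / 2) * (2 * t) ^ (((n : ℝ) + 1) / 2)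
          * π ^ (-((n : ℝ) - 1) / 2) / t := by ring
    _ = 2 * π ^ (-((n : ℝ) - 1) / 2) := by
      rw [hexp]
      field_simp

theorem stmt_3_general (n : ℕ) (cE : ℝ) :
    ∃ C : ℝ, ∀ x' : EuclideanSpace ℝ (Fin (n-1)), x' ≠ 0 → ∀ yn t : ℝ, 0 < yn → 0 < t →
      ∀ j : Fin (n-1),
      |∫ y' in Metric.closedBall (0 : EuclideanSpace ℝ (Fin (n-1))) (‖x'‖/2),
          (fderiv ℝ (fun z' : EuclideanSpace ℝ (Fin (n-1)) =>
              (2 * Real.pi * t) ^ (-((n:ℝ)-1)/2) * Real.exp (-‖z'‖^2 / (2*t))) y')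
            (EuclideanSpace.single j 1)
          * deriv (fun a : ℝ => cE * (‖x' - y'‖^2 + a^2) ^ (((2:ℝ) - n)/2)) yn|
      ≤ C * ‖x'‖ ^ (-(n:ℝ)) *
        ∫ y' in Metric.closedBall (0 : EuclideanSpace ℝ (Fin (n-1))) (‖x'‖/(2 * Real.sqrt t)),
          ‖y'‖^2 * Real.exp (-‖y'‖^2) := by
  refine ⟨|cE * (2 - n)| * (n / 2 * 2 ^ n) * (2 * π ^ (-((n : ℝ) - 1) / 2)), ?_⟩
  intro x' hx yn t hyn ht j
  have hn : 1 ≤ n := by have := j.pos; omega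
  set ct := (2 * π * t) ^ (-((n : ℝ) - 1) / 2)
  have hintegrand := fun y' => fderiv_const_mul_exp_apply_mul_deriv_const_mul_rpow ct t cE n x' y'
    (EuclideanSpace.single j 1) hyn.ne'
  simp_rw [hintegrand]
  rw [integral_const_mul, abs_mul]
  have hcore := abs_setIntegral_gaussian_deriv_mul_le volume hx (EuclideanSpace.single j 1) ct yn
    (s := -(n : ℝ) / 2) (by have : (0 : ℝ) ≤ n := n.cast_nonneg; linarith) ht
  rw [PiLp.norm_single, norm_one, mul_one, abs_of_pos (by positivity : 0 < ct), abs_div, abs_neg,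
    Nat.abs_cast, abs_two, show 2 * (-(n : ℝ) / 2) = -n by ring,
    div_two_rpow_neg_natCast (norm_nonneg _)] at hcore
  have hscale := setIntegral_closedBall_norm_sq_mul_exp_le (E := EuclideanSpace ℝ (Fin (n - 1)))
    volume (r := ‖x'‖ / 2) (by positivity) ht
  rw [finrank_euclideanSpace_fin, div_div] at hscale
  calc _ ≤ |cE * (2 - n)| * (ct / t * ((n : ℝ) / 2 * (2 ^ n * ‖x'‖ ^ (-(n : ℝ))))
          * (√(2 * t) ^ (n - 1 + 2) *
            ∫ y' in closedBall (0 : EuclideanSpace ℝ (Fin (n - 1))) (‖x'‖ / (2 * √t)),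
              ‖y'‖ ^ 2 * exp (-‖y'‖ ^ 2))) := by
        gcongr
        exact hcore.trans (by gcongr)
    _ = _ := by
        rw [← two_mul_pi_mul_rpow_div_mul_sqrt_pow hn ht]
        ring

/-- near-singularity estimate for
`∫_{|y'| ≤ |x'|/2} D_{y_j}Γ'(y',t) D_{y_n}E(x'-y',y_n) dy'`, where
`Γ'(y',t) = (2πt)^{-(n-1)/2} e^{-|y'|²/(2t)}` is the Gaussian kernel in `ℝ^{n-1}` and
`E(x) = c_n |x|^{2-n}` the fundamental solution of the Laplacian in `ℝ^n`. -/
theorem stmt_3 (n : ℕ) (hn : 3 ≤ n) (cE : ℝ) :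
    ∃ C : ℝ, ∀ x' : EuclideanSpace ℝ (Fin (n-1)), x' ≠ 0 → ∀ yn t : ℝ, 0 < yn → 0 < t →
      ∀ j : Fin (n-1),
      |∫ y' in Metric.closedBall (0 : EuclideanSpace ℝ (Fin (n-1))) (‖x'‖/2),
          (fderiv ℝ (fun z' : EuclideanSpace ℝ (Fin (n-1)) =>
              (2 * Real.pi * t) ^ (-((n:ℝ)-1)/2) * Real.exp (-‖z'‖^2 / (2*t))) y')
            (EuclideanSpace.single j 1)
          * deriv (fun a : ℝ => cE * (‖x' - y'‖^2 + a^2) ^ (((2:ℝ) - n)/2)) yn|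
      ≤ C * ‖x'‖ ^ (-(n:ℝ)) *
        ∫ y' in Metric.closedBall (0 : EuclideanSpace ℝ (Fin (n-1))) (‖x'‖/(2 * Real.sqrt t)),
          ‖y'‖^2 * Real.exp (-‖y'‖^2) :=
  stmt_3_general n cE
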